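/- Let p ∈ NC(n), let p° be the non-crossing partition of [2n] formed by placing p on the odd positions and K(p) on the even positions, and let B be a block of p, identified with the corresponding block of p°. Then: (i) every block of p° adjacent to B in p° consists of even positions, i.e. comes from K(p); (ii) exactly one block of K(p) adjacent to B in p° has depth d_{p°} at most d_{p°}(B); (iii) the blocks of K(p) adjacent to B in p° with depth strictly larger than d_{p°}(B) number exactly |B| − 1, and for each 1 ≤ i ≤ |B|−1 exactly one of them has all of its elements lying strictly between the positions in [2n] of the i-th and (i+1)-th smallest elements of B. -/

import Mathlib

namespace NCPaper

/-- The index set `[n] = {1, …, n}` inside `ℕ`. -/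
def Idx (n : ℕ) : Set ℕ := Set.Icc 1 n

/-- `r` is (the equivalence relation of) a partition of the set `S`:
a symmetric, transitive relation on `ℕ` whose domain is exactly `S`.
For `S ⊆ [n]` this encodes a partial partition of `[n]` with support `S`;
its blocks are the equivalence classes. -/
def IsPartitionOn (S : Set ℕ) (r : ℕ → ℕ → Prop) : Prop :=
  (∀ i j, r i j → r j i) ∧ (∀ i j k, r i j → r j k → r i k) ∧ (∀ i, r i i ↔ i ∈ S)

/-- A partition (relation) is non-crossing if there are no `i < j < k < l`
with `i ∼ k`, `j ∼ l` and `i ≁ j`. -/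
def NonCrossing (r : ℕ → ℕ → Prop) : Prop :=
  ∀ i j k l, i < j → j < k → k < l → r i k → r j l → r i j

/-- Refinement order on partitions encoded as relations:
`r ≤ s` iff every block of `r` is contained in a block of `s`. -/
def RelLE (r s : ℕ → ℕ → Prop) : Prop := ∀ i j, r i j → s i j

/-- Join of two partial partitions with complementary (disjoint) supports:
the partition whose blocks are the blocks of `r` together with those of `s`. -/
def relJoin (r s : ℕ → ℕ → Prop) : ℕ → ℕ → Prop := fun i j => r i j ∨ s i j

/-- `k` lies (weakly) between `i` and `j`, i.e. `k ∈ {min i j, …, max i j}`. -/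
def Between (i j k : ℕ) : Prop := min i j ≤ k ∧ k ≤ max i j

/-- The Kreweras complement `kr(r, S)` of the partial partition `(r, S)` of `[n]`:
the relation with support `[n] \ S` in which `i ∼ j` iff no element `k` of
`{i,…,j} ∩ S` is `r`-equivalent to an element `l` of `S \ {i,…,j}`. -/
def krRel (n : ℕ) (S : Set ℕ) (r : ℕ → ℕ → Prop) : ℕ → ℕ → Prop :=
  fun i j => i ∈ Idx n ∧ j ∈ Idx n ∧ i ∉ S ∧ j ∉ S ∧
    ∀ k l, k ∈ S → l ∈ S → Between i j k → ¬ Between i j l → ¬ r k l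

/-- Transport of a relation along a map. -/
def mapRel (f : ℕ → ℕ) (r : ℕ → ℕ → Prop) : ℕ → ℕ → Prop :=
  fun a b => ∃ i j, f i = a ∧ f j = b ∧ r i j

/-- `i ↦ 2i - δ(i)` where `δ(i) = 1` for odd `i` and `δ(i) = 0` for even `i`;
this maps `[2k]` onto `S = {1,4,5,8,…,4k-3,4k} ⊆ [4k]`. -/
def fS (i : ℕ) : ℕ := 2 * i - i % 2

/-- `i ↦ 2i - (1 - δ(i))`; this maps `[2k]` onto `Sᶜ = {2,3,6,7,…} ⊆ [4k]`. -/
def fSc (i : ℕ) : ℕ := 2 * i - (1 - i % 2)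

/-- The nested Kreweras complement `kr′(π)` of a partition `π` of `[2k]`:
transport `π` along `fS` to a partial partition of `[4k]` with support
`fS '' [2k]`, take its Kreweras complement and transport back along `fSc`. -/
def krNested (k : ℕ) (r : ℕ → ℕ → Prop) : ℕ → ℕ → Prop :=
  fun i j => krRel (4 * k) (fS '' Idx (2 * k)) (mapRel fS r) (fSc i) (fSc j)

/-- `π₀`: the partition of `[2k]` with blocks `{2i, 2i+1}`, indices mod `2k`
(so one block is `{2k, 1}`). -/
def piZero (k : ℕ) : ℕ → ℕ → Prop := fun i j =>
  i ∈ Idx (2 * k) ∧ j ∈ Idx (2 * k) ∧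
    (i = j ∨ (Even i ∧ j = i + 1) ∨ (Even j ∧ i = j + 1) ∨
      (i = 1 ∧ j = 2 * k) ∨ (j = 1 ∧ i = 2 * k))

/-- `π₁`: the partition of `[2k]` with blocks `{2i-1, 2i}`, `1 ≤ i ≤ k`. -/
def piOne (k : ℕ) : ℕ → ℕ → Prop := fun i j =>
  i ∈ Idx (2 * k) ∧ j ∈ Idx (2 * k) ∧
    (i = j ∨ (Odd i ∧ j = i + 1) ∨ (Odd j ∧ i = j + 1))

/-- The `i`-th odd position `2i - 1` in `[2n]`. -/
def oddPos (i : ℕ) : ℕ := 2 * i - 1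

/-- The `i`-th even position `2i` in `[2n]`. -/
def evenPos (i : ℕ) : ℕ := 2 * i

/-- The Kreweras complement `K(p)` of a partition `p` of `[n]`: transport `p`
along `i ↦ 2i-1` to the odd positions `σ = {1,3,…,2n-1}` of `[2n]`, take the
Kreweras complement there, and transport back along `i ↦ 2i`. -/
def Kmap (n : ℕ) (r : ℕ → ℕ → Prop) : ℕ → ℕ → Prop :=
  fun i j => krRel (2 * n) (oddPos '' Idx n) (mapRel oddPos r) (evenPos i) (evenPos j)

/-- `p° = (p̂,σ) ∨ (K̂(p),σᶜ)`: the partition of `[2n]` obtained by placing `p`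
on the odd positions and `K(p)` on the even positions. -/
def pCirc (n : ℕ) (p : ℕ → ℕ → Prop) : ℕ → ℕ → Prop :=
  relJoin (mapRel oddPos p) (mapRel evenPos (Kmap n p))

/-- `F(π)` for `π ≥ π₀`: `i ∼ j` iff `2i-1 ∼_π 2j-1`. -/
def Fmap (r : ℕ → ℕ → Prop) : ℕ → ℕ → Prop := fun i j => r (2 * i - 1) (2 * j - 1)

/-- `G(π)` for `π ≥ π₁`: `i ∼ j` iff `2i ∼_π 2j`. -/
def Gmap (r : ℕ → ℕ → Prop) : ℕ → ℕ → Prop := fun i j => r (2 * i) (2 * j)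

/-- `B` is a block of the partition (relation) `r`. -/
def IsBlock (r : ℕ → ℕ → Prop) (B : Set ℕ) : Prop := ∃ i, r i i ∧ B = {j | r i j}

/-- The number `|r|` of blocks of the partition `r`. -/
noncomputable def numBlocks (r : ℕ → ℕ → Prop) : ℕ := {B : Set ℕ | IsBlock r B}.ncard

/-- `B' ⪯ B` for `B = {i₁<…<i_t}`, `B' = {j₁<…<j_{t'}}`: `i₁ < j₁` and `j_{t'} < i_t`. -/
def Nested (B' B : Set ℕ) : Prop := sInf B < sInf B' ∧ sSup B' < sSup B

/-- The depth `d_p(B)` of a block `B`: the maximal number `m` of blocks in a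
chain `B = X₁ ⪯ X₂ ⪯ … ⪯ X_m` of blocks of `p`. -/
noncomputable def depth (p : ℕ → ℕ → Prop) (B : Set ℕ) : ℕ :=
  sSup {m : ℕ | ∃ c : ℕ → Set ℕ, c 1 = B ∧
    (∀ i, 1 ≤ i → i ≤ m → IsBlock p (c i)) ∧
    (∀ i, 1 ≤ i → i < m → Nested (c i) (c (i + 1)))}

/-- `p_{B,B'}`: the partition obtained from `p` by merging the blocks `B` and `B'`. -/
def mergeRel (p : ℕ → ℕ → Prop) (B B' : Set ℕ) : ℕ → ℕ → Prop :=
  fun i j => p i j ∨ (p i i ∧ p j j ∧ i ∈ B ∪ B' ∧ j ∈ B ∪ B')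

/-- Two distinct blocks `B, B'` of `p` are adjacent if replacing them by
`B ∪ B'` yields a non-crossing partition. -/
def Adjacent (p : ℕ → ℕ → Prop) (B B' : Set ℕ) : Prop :=
  IsBlock p B ∧ IsBlock p B' ∧ B ≠ B' ∧ NonCrossing (mergeRel p B B')

/-- The set of the `i` smallest elements of `B`. -/
def lowerPart (B : Set ℕ) (i : ℕ) : Set ℕ := {x ∈ B | (B ∩ Set.Iic x).ncard ≤ i}

/-- The set of the remaining elements of `B` (all but the `i` smallest). -/
def upperPart (B : Set ℕ) (i : ℕ) : Set ℕ := {x ∈ B | i < (B ∩ Set.Iic x).ncard}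

/-- `p_{B,i}`: the partition obtained from `p` by splitting the block `B` into
the block of its `i` smallest elements and the block of its remaining elements. -/
def splitRel (p : ℕ → ℕ → Prop) (B : Set ℕ) (i : ℕ) : ℕ → ℕ → Prop :=
  fun x y => p x y ∧ ((x ∈ lowerPart B i ∧ y ∈ lowerPart B i) ∨
    (x ∈ upperPart B i ∧ y ∈ upperPart B i) ∨ (x ∉ B ∧ y ∉ B))

/-- The `i`-th smallest element of `B` (1-indexed). -/
noncomputable def nthSmall (B : Set ℕ) (i : ℕ) : ℕ :=
  sInf {x | x ∈ B ∧ (B ∩ Set.Iic x).ncard = i}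

/-!
`K(p)` joins `a` and `c` exactly when the segment `(min a c, max a c]` is a union of blocks of `p`.
If two blocks of a non-crossing partition can be merged without crossing, a closest pair `u < v`
of their elements in different blocks encloses a union of blocks; in `p°` such a gap is empty,
since `K(p)` joins across every segment that is a union of blocks. So a neighbour of
`B̂ = oddPos '' B` contains a position next to `B̂`: either `2b`, or `2b - 2`, which `K(p)` joins
to `2b'` for the predecessor `b'` of `b` in `B` (cyclically). Conversely, blocks containing
consecutive positions can always be merged. Hence the neighbours of `B̂` are the blocks `E_b` of
`2b`, `b ∈ B`. For `b < max B`, `E_b` lies between `2b` and the next element of `B̂`, so it is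
nested in `B̂`; `E_{max B}` contains `2 max B` and `2 (min B - 1)` (or `2n`), so every block
enveloping it envelops `B̂`.
-/

def Saturated (r : ℕ → ℕ → Prop) (s : Set ℕ) : Prop :=
  ∀ ⦃i j⦄, r i j → i ∈ s → j ∈ s

def blockOf (r : ℕ → ℕ → Prop) (x : ℕ) : Set ℕ := {y | r x y}

section Partition

variable {S B C X Y : Set ℕ} {r : ℕ → ℕ → Prop} {i j k l x y : ℕ}

namespace IsPartitionOn

theorem symm (hr : IsPartitionOn S r) (h : r i j) : r j i := hr.1 i j h

theorem trans (hr : IsPartitionOn S r) (h : r i j) (h' : r j k) : r i k := hr.2.1 i j k h h'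

theorem rel_self_left (hr : IsPartitionOn S r) (h : r i j) : r i i := hr.trans h (hr.symm h)

theorem rel_self_iff (hr : IsPartitionOn S r) : r i i ↔ i ∈ S := hr.2.2 i

theorem mem_left (hr : IsPartitionOn S r) (h : r i j) : i ∈ S :=
  hr.rel_self_iff.1 (hr.rel_self_left h)

theorem mem_right (hr : IsPartitionOn S r) (h : r i j) : j ∈ S := hr.mem_left (hr.symm h)

theorem mem_Icc_left {m : ℕ} (hr : IsPartitionOn (Idx m) r) (h : r i j) : 1 ≤ i ∧ i ≤ m :=
  hr.mem_left h

theorem mem_Icc_right {m : ℕ} (hr : IsPartitionOn (Idx m) r) (h : r i j) : 1 ≤ j ∧ j ≤ m :=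
  hr.mem_right h

theorem blockOf_eq (hr : IsPartitionOn S r) (h : r i j) : blockOf r i = blockOf r j :=
  Set.ext fun _ => ⟨hr.trans (hr.symm h), hr.trans h⟩

end IsPartitionOn

theorem isBlock_blockOf (h : r x x) : IsBlock r (blockOf r x) := ⟨x, h, rfl⟩

namespace IsBlock

theorem rel (hr : IsPartitionOn S r) (hB : IsBlock r B) (hx : x ∈ B) (hy : y ∈ B) : r x y := by
  obtain ⟨i, -, rfl⟩ := hB
  exact hr.trans (hr.symm hx) hy

theorem mem_of_rel (hr : IsPartitionOn S r) (hB : IsBlock r B) (hx : x ∈ B) (h : r x y) :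
    y ∈ B := by
  obtain ⟨i, -, rfl⟩ := hB
  exact hr.trans hx h

theorem saturated (hr : IsPartitionOn S r) (hB : IsBlock r B) : Saturated r B :=
  fun _ _ h hx => hB.mem_of_rel hr hx h

theorem eq_blockOf (hr : IsPartitionOn S r) (hB : IsBlock r B) (hx : x ∈ B) :
    B = blockOf r x :=
  Set.ext fun _ => ⟨fun hy => hB.rel hr hx hy, fun hy => hB.mem_of_rel hr hx hy⟩

theorem eq_of_rel (hr : IsPartitionOn S r) (hX : IsBlock r X) (hY : IsBlock r Y) (hx : x ∈ X)
    (hy : y ∈ Y) (h : r x y) : X = Y := by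
  rw [hX.eq_blockOf hr hx, hY.eq_blockOf hr hy, hr.blockOf_eq h]

theorem nonempty (hB : IsBlock r B) : B.Nonempty := by
  obtain ⟨i, hi, rfl⟩ := hB
  exact ⟨i, hi⟩

theorem subset (hr : IsPartitionOn S r) (hB : IsBlock r B) : B ⊆ S := by
  obtain ⟨i, -, rfl⟩ := hB
  exact fun _ hy => hr.mem_right hy

theorem finite {m : ℕ} (hr : IsPartitionOn (Idx m) r) (hB : IsBlock r B) : B.Finite :=
  (Set.finite_Icc 1 m).subset (hB.subset hr)

end IsBlock

theorem Saturated.union (hs : Saturated r X) (ht : Saturated r Y) : Saturated r (X ∪ Y) :=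
  fun _ _ h => Or.imp (hs h) (ht h)

theorem Saturated.diff (hr : IsPartitionOn S r) (hs : Saturated r X) (ht : Saturated r Y) :
    Saturated r (X \ Y) :=
  fun _ _ h hi => ⟨hs h hi.1, fun hj => hi.2 (ht (hr.symm h) hj)⟩

theorem NonCrossing.mem_Ioo_of_rel (hr : IsPartitionOn S r) (hnc : NonCrossing r)
    (hjl : r j l) (hw : j < i ∧ i < l) (hji : ¬ r j i) (hik : r i k) : j < k ∧ k < l := by
  rcases lt_trichotomy k j with hkj | rfl | hjk
  · have := hnc k j i l hkj hw.1 hw.2 (hr.symm hik) hjl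
    exact (hji (hr.trans (hr.symm this) (hr.symm hik))).elim
  · exact (hji (hr.symm hik)).elim
  rcases lt_trichotomy k l with hkl | rfl | hlk
  · exact ⟨hjk, hkl⟩
  · exact (hji (hr.trans hjl (hr.symm hik))).elim
  · exact (hji (hnc j i l k hw.1 hw.2 hlk hjl hik)).elim

theorem saturated_Ioo_diff (hr : IsPartitionOn S r) (hnc : NonCrossing r) (hB : IsBlock r B)
    (hx : x ∈ B) (hy : y ∈ B) : Saturated r (Set.Ioo x y \ B) := fun _ _ h hi =>
  ⟨hnc.mem_Ioo_of_rel hr (hB.rel hr hx hy) hi.1 (fun hxi => hi.2 (hB.mem_of_rel hr hx hxi)) h,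
    fun hj => hi.2 (hB.mem_of_rel hr hj (hr.symm h))⟩

theorem saturated_Icc (hr : IsPartitionOn S r) (hnc : NonCrossing r) (hB : IsBlock r B)
    (hx : x ∈ B) (hy : y ∈ B) (hsub : B ⊆ Set.Icc x y) : Saturated r (Set.Icc x y) := by
  have : Set.Icc x y = B ∪ (Set.Ioo x y \ B) := by
    ext m
    by_cases hm : m ∈ B
    · simp [hm, hsub hm]
    · have : m ≠ x := fun h => hm (h ▸ hx)
      have : m ≠ y := fun h => hm (h ▸ hy)
      simp only [Set.mem_Icc, Set.mem_union, hm, Set.mem_sdiff, Set.mem_Ioo, not_false_eq_true,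
        and_true, false_or]
      omega
  rw [this]
  exact (hB.saturated hr).union (saturated_Ioo_diff hr hnc hB hx hy)

theorem mem_union_iff_of_mergeRel (hr : IsPartitionOn S r) (hX : IsBlock r X) (hY : IsBlock r Y)
    (h : mergeRel r X Y i j) : i ∈ X ∪ Y ↔ j ∈ X ∪ Y := by
  have hM := (hX.saturated hr).union (hY.saturated hr)
  rcases h with h | ⟨-, -, hi, hj⟩
  · exact ⟨hM h, hM (hr.symm h)⟩
  · exact iff_of_true hi hj

/-- A block of `r` outside `X ∪ Y` cannot separate `X` from `Y` if they contain consecutive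
integers. -/
theorem mem_Ioo_iff_of_succ_mem (hr : IsPartitionOn S r) (hnc : NonCrossing r)
    (hX : IsBlock r X) (hY : IsBlock r Y) (hx : x ∈ X) (hx' : x + 1 ∈ Y) (hjl : r j l)
    (hj : j ∉ X ∪ Y) (hi : i ∈ X ∪ Y) (hk : k ∈ X ∪ Y) :
    (j < i ∧ i < l ↔ j < k ∧ k < l) := by
  have hM := (hX.saturated hr).union (hY.saturated hr)
  have hl : l ∉ X ∪ Y := fun h => hj (hM (hr.symm hjl) h)
  have hrel : ∀ m w, m ∈ X ∪ Y → r m w → (j < m ∧ m < l ↔ j < w ∧ w < l) :=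
    fun m w hm h =>
      ⟨(hnc.mem_Ioo_of_rel hr hjl · (fun h' => hj (hM (hr.symm h') hm)) h),
        (hnc.mem_Ioo_of_rel hr hjl · (fun h' => hj (hM (hr.symm h') (hM h hm))) (hr.symm h))⟩
  have hsucc : (j < x ∧ x < l ↔ j < x + 1 ∧ x + 1 < l) := by
    have : x ≠ j := fun h => hj (h ▸ Or.inl hx)
    have : x + 1 ≠ l := fun h => hl (h ▸ Or.inr hx')
    omega
  have key : ∀ m ∈ X ∪ Y, (j < m ∧ m < l ↔ j < x ∧ x < l) := by
    rintro m (hm | hm)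
    · exact (hrel x m (Or.inl hx) (hX.rel hr hx hm)).symm
    · exact (hrel (x + 1) m (Or.inr hx') (hY.rel hr hx' hm)).symm.trans hsucc.symm
  exact (key i hi).trans (key k hk).symm

theorem nonCrossing_mergeRel_of_succ_mem (hr : IsPartitionOn S r) (hnc : NonCrossing r)
    (hX : IsBlock r X) (hY : IsBlock r Y) (hx : x ∈ X) (hx' : x + 1 ∈ Y) :
    NonCrossing (mergeRel r X Y) := by
  intro i j k l hij hjk hkl hik hjl
  rcases hik with hik | ⟨hii, hkk, hiM, hkM⟩ <;> rcases hjl with hjl | ⟨hjj, hll, hjM, hlM⟩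
  · exact Or.inl (hnc i j k l hij hjk hkl hik hjl)
  · by_cases hiM : i ∈ X ∪ Y
    · exact Or.inr ⟨hr.rel_self_left hik, hjj, hiM, hjM⟩
    · have := (mem_Ioo_iff_of_succ_mem hr hnc hX hY hx hx' hik hiM hjM hlM).1 ⟨hij, hjk⟩
      omega
  · by_cases hjM : j ∈ X ∪ Y
    · exact Or.inr ⟨hii, hr.rel_self_left hjl, hiM, hjM⟩
    · have := (mem_Ioo_iff_of_succ_mem hr hnc hX hY hx hx' hjl hjM hkM hiM).1 ⟨hjk, hkl⟩
      omega
  · exact Or.inr ⟨hii, hjj, hiM, hjM⟩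

theorem exists_closest_unrelated (hr : IsPartitionOn S r) (hX : IsBlock r X) (hY : IsBlock r Y)
    (hXY : X ≠ Y) : ∃ u v, u < v ∧ u ∈ X ∪ Y ∧ v ∈ X ∪ Y ∧ ¬ r u v ∧
      ∀ w, u < w → w < v → w ∉ X ∪ Y := by
  classical
  have hex : ∃ d u v, u < v ∧ v = u + d ∧ u ∈ X ∪ Y ∧ v ∈ X ∪ Y ∧ ¬ r u v := by
    obtain ⟨x, hx⟩ := hX.nonempty
    obtain ⟨y, hy⟩ := hY.nonempty
    have hxy : ¬ r x y := fun h => hXY (hX.eq_of_rel hr hY hx hy h)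
    rcases lt_trichotomy x y with h | rfl | h
    · exact ⟨y - x, x, y, h, by omega, Or.inl hx, Or.inr hy, hxy⟩
    · exact (hxy (hX.rel hr hx hx)).elim
    · exact ⟨x - y, y, x, h, by omega, Or.inr hy, Or.inl hx, fun h' => hxy (hr.symm h')⟩
  obtain ⟨u, v, huv, hvu, hu, hv, hn⟩ := Nat.find_spec hex
  refine ⟨u, v, huv, hu, hv, hn, fun w h1 h2 hw => ?_⟩
  by_cases h : r u w
  · exact Nat.find_min hex (m := v - w) (by omega)
      ⟨w, v, h2, by omega, hw, hv, fun h' => hn (hr.trans h h')⟩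
  · exact Nat.find_min hex (m := w - u) (by omega) ⟨u, w, h1, by omega, hu, hw, h⟩

theorem exists_saturated_Ioo_of_nonCrossing_mergeRel (hr : IsPartitionOn S r)
    (hX : IsBlock r X) (hY : IsBlock r Y) (hXY : X ≠ Y) (hnc : NonCrossing (mergeRel r X Y)) :
    ∃ u v, u < v ∧ u ∈ X ∪ Y ∧ v ∈ X ∪ Y ∧ ¬ r u v ∧
      Saturated r (Set.Ioo u v) := by
  have hM := (hX.saturated hr).union (hY.saturated hr)
  have hrefl : ∀ u ∈ X ∪ Y, r u u := fun u hu =>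
    hu.elim (fun h => hX.rel hr h h) (fun h => hY.rel hr h h)
  obtain ⟨u, v, huv, hu, hv, hn, hgap⟩ := exists_closest_unrelated hr hX hY hXY
  refine ⟨u, v, huv, hu, hv, hn, fun w w' h hw => ?_⟩
  have hwM := hgap w hw.1 hw.2
  have hw'M : w' ∉ X ∪ Y := fun h' => hwM (hM (hr.symm h) h')
  have huv' : mergeRel r X Y u v := Or.inr ⟨hrefl u hu, hrefl v hv, hu, hv⟩
  rcases lt_trichotomy w' u with h1 | rfl | h1
  · exact (hw'M ((mem_union_iff_of_mergeRel hr hX hY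
      (hnc w' u w v h1 hw.1 hw.2 (Or.inl (hr.symm h)) huv')).2 hu)).elim
  · exact (hw'M hu).elim
  rcases lt_trichotomy w' v with h2 | rfl | h2
  · exact ⟨h1, h2⟩
  · exact (hw'M hv).elim
  · exact (hwM ((mem_union_iff_of_mergeRel hr hX hY
      (hnc u w v w' hw.1 hw.2 h2 huv' (Or.inl h))).1 hu)).elim

end Partition

section Kreweras

variable {n a b c d f x y : ℕ} {p : ℕ → ℕ → Prop} {X : Set ℕ}

theorem kmap_iff (hp : IsPartitionOn (Idx n) p) :
    Kmap n p a c ↔ a ∈ Idx n ∧ c ∈ Idx n ∧ Saturated p (Set.Ioc (min a c) (max a c)) := by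
  simp only [Kmap, krRel, Between, Idx, Set.mem_Icc, evenPos, oddPos]
  constructor
  · rintro ⟨ha, hc, -, -, h⟩
    refine ⟨by omega, by omega, fun m m' hmm' hm => ?_⟩
    have hm1 := hp.mem_left hmm'
    have hm2 := hp.mem_right hmm'
    simp only [Idx, Set.mem_Icc, Set.mem_Ioc] at hm1 hm2 hm ⊢
    by_contra hm'
    exact h (oddPos m) (oddPos m') ⟨m, hm1, rfl⟩ ⟨m', hm2, rfl⟩
      (by simp only [oddPos]; omega) (by simp only [oddPos]; omega) ⟨m, m', rfl, rfl, hmm'⟩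
  · rintro ⟨ha, hc, h⟩
    refine ⟨by omega, by omega, ?_, ?_, ?_⟩
    · rintro ⟨m, hm, hme⟩
      simp only [Set.mem_Icc, oddPos] at hm hme
      omega
    · rintro ⟨m, hm, hme⟩
      simp only [Set.mem_Icc, oddPos] at hm hme
      omega
    · rintro k l ⟨m, hm, rfl⟩ ⟨m', hm', rfl⟩ hk hl ⟨i, j, hi, hj, hij⟩
      have hi1 := hp.mem_left hij
      have hj1 := hp.mem_right hij
      simp only [Idx, Set.mem_Icc, oddPos] at hm hm' hi hj hi1 hj1 hk hl
      have := h hij (by simp only [Set.mem_Ioc]; omega)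
      simp only [Set.mem_Ioc] at this
      omega

theorem kmap_iff_of_le (hp : IsPartitionOn (Idx n) p) (h : a ≤ c) :
    Kmap n p a c ↔ a ∈ Idx n ∧ c ∈ Idx n ∧ Saturated p (Set.Ioc a c) := by
  rw [kmap_iff hp, min_eq_left h, max_eq_right h]

theorem kmap_comm (hp : IsPartitionOn (Idx n) p) : Kmap n p a c ↔ Kmap n p c a := by
  rw [kmap_iff hp, kmap_iff hp, min_comm, max_comm]
  tauto

theorem isPartitionOn_kmap (hp : IsPartitionOn (Idx n) p) : IsPartitionOn (Idx n) (Kmap n p) := by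
  refine ⟨fun a c => (kmap_comm hp).1, fun a b c hab hbc => ?_, fun a => ?_⟩
  · -- the segment from `a` to `c` is the symmetric difference of those via `b`
    rw [kmap_iff hp] at hab hbc ⊢
    refine ⟨hab.1, hbc.2.1, ?_⟩
    have hs := (hab.2.2.diff hp hbc.2.2).union (hbc.2.2.diff hp hab.2.2)
    convert hs using 1
    ext m
    simp only [Set.mem_Ioc, Set.mem_union, Set.mem_sdiff]
    omega
  · rw [kmap_iff hp, min_self, max_self, Set.Ioc_self]
    exact ⟨fun h => h.1, fun h => ⟨h, h, fun _ _ _ hm => hm.elim⟩⟩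

theorem nonCrossing_kmap (hp : IsPartitionOn (Idx n) p) : NonCrossing (Kmap n p) := by
  intro a b c d hab hbc hcd hac hbd
  rw [kmap_iff_of_le hp (by omega)] at hac hbd ⊢
  refine ⟨hac.1, hbd.1, ?_⟩
  convert hac.2.2.diff hp hbd.2.2 using 1
  ext m
  simp only [Set.mem_Ioc, Set.mem_sdiff]
  omega

theorem kmap_mem_Ico (hp : IsPartitionOn (Idx n) p) (hbc : p b c) (hlt : b < c)
    (hK : Kmap n p b f) : b ≤ f ∧ f < c := by
  obtain ⟨-, -, hs⟩ := (kmap_iff hp).1 hK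
  constructor
  · by_contra h
    have := hs hbc (by simp only [Set.mem_Ioc]; omega)
    simp only [Set.mem_Ioc] at this
    omega
  · by_contra h
    have := hs (hp.symm hbc) (by simp only [Set.mem_Ioc]; omega)
    simp only [Set.mem_Ioc] at this
    omega

theorem kmap_pred_of_forall_not_mem_Ioo (hp : IsPartitionOn (Idx n) p) (hnc : NonCrossing p)
    (hX : IsBlock p X) (hb : b ∈ X) (hc : c ∈ X) (hlt : b < c)
    (hgap : ∀ m ∈ X, m ≤ b ∨ c ≤ m) : Kmap n p b (c - 1) := by
  have hbI := hX.subset hp hb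
  have hcI := hX.subset hp hc
  simp only [Idx, Set.mem_Icc] at hbI hcI
  rw [kmap_iff_of_le hp (by omega)]
  refine ⟨by simp only [Idx, Set.mem_Icc]; omega, by simp only [Idx, Set.mem_Icc]; omega, ?_⟩
  convert saturated_Ioo_diff hp hnc hX hb hc using 1
  ext m
  simp only [Set.mem_Ioc, Set.mem_sdiff, Set.mem_Ioo]
  exact ⟨fun h => ⟨by omega, fun hm => by have := hgap m hm; omega⟩, fun h => by omega⟩

theorem kmap_pred_of_subset_Icc (hp : IsPartitionOn (Idx n) p) (hnc : NonCrossing p)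
    (hX : IsBlock p X) (hx : x ∈ X) (hy : y ∈ X) (hsub : X ⊆ Set.Icc x y) (h2 : 2 ≤ x) :
    Kmap n p (x - 1) y := by
  have hyI := hX.subset hp hy
  have hxy := hsub hy
  simp only [Idx, Set.mem_Icc] at hyI hxy
  rw [kmap_iff_of_le hp (by omega)]
  refine ⟨by simp only [Idx, Set.mem_Icc]; omega, by simp only [Idx, Set.mem_Icc]; omega, ?_⟩
  convert saturated_Icc hp hnc hX hx hy hsub using 1
  ext m
  simp only [Set.mem_Ioc, Set.mem_Icc]
  omega

theorem kmap_of_one_mem (hp : IsPartitionOn (Idx n) p) (hnc : NonCrossing p)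
    (hX : IsBlock p X) (h1 : 1 ∈ X) (hy : y ∈ X) (hsub : X ⊆ Set.Icc 1 y) : Kmap n p y n := by
  have hyI := hX.subset hp hy
  simp only [Idx, Set.mem_Icc] at hyI
  rw [kmap_iff_of_le hp hyI.2]
  refine ⟨by simp only [Idx, Set.mem_Icc]; omega, by simp only [Idx, Set.mem_Icc]; omega, ?_⟩
  have hIdx : Saturated p (Idx n) := fun _ _ h _ => hp.mem_right h
  convert hIdx.diff hp (saturated_Icc hp hnc hX h1 hy hsub) using 1
  ext m
  simp only [Set.mem_Ioc, Set.mem_sdiff, Idx, Set.mem_Icc]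
  omega

theorem exists_mem_kmap_pred (hp : IsPartitionOn (Idx n) p) (hnc : NonCrossing p)
    (hX : IsBlock p X) (hc : c ∈ X) (h2 : 2 ≤ c) : ∃ b ∈ X, Kmap n p (c - 1) b := by
  by_cases h : ∃ m ∈ X, m < c
  · obtain ⟨b, ⟨hb, hbc⟩, hmax⟩ := Set.exists_max_image {m ∈ X | m < c} id
      ((hX.finite hp).subset fun _ h => h.1) h
    refine ⟨b, hb, (kmap_comm hp).1 (kmap_pred_of_forall_not_mem_Ioo hp hnc hX hb hc hbc
      fun m hm => ?_)⟩
    by_contra! h'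
    exact absurd (hmax m ⟨hm, h'.2⟩) (by simp only [id]; omega)
  · push Not at h
    obtain ⟨y, hy, hmax⟩ := Set.exists_max_image X id (hX.finite hp) ⟨c, hc⟩
    exact ⟨y, hy,
      kmap_pred_of_subset_Icc hp hnc hX hc hy (fun m hm => ⟨h m hm, hmax m hm⟩) h2⟩

end Kreweras

section PCirc

variable {n a b c u v y : ℕ} {p : ℕ → ℕ → Prop} {B C : Set ℕ}

theorem pCirc_oddPos (h : p a c) : pCirc n p (oddPos a) (oddPos c) := Or.inl ⟨a, c, rfl, rfl, h⟩

theorem pCirc_evenPos (h : Kmap n p a c) : pCirc n p (evenPos a) (evenPos c) :=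
  Or.inr ⟨a, c, rfl, rfl, h⟩

theorem isPartitionOn_pCirc (hp : IsPartitionOn (Idx n) p) :
    IsPartitionOn (Idx (2 * n)) (pCirc n p) := by
  have hK := isPartitionOn_kmap hp
  refine ⟨?_, ?_, fun x => ⟨?_, fun hx => ?_⟩⟩
  · rintro x y (⟨a, c, rfl, rfl, h⟩ | ⟨a, c, rfl, rfl, h⟩)
    exacts [pCirc_oddPos (hp.symm h), pCirc_evenPos (hK.symm h)]
  · rintro x y z (⟨a, c, rfl, rfl, h⟩ | ⟨a, c, rfl, rfl, h⟩)
      (⟨c', d, hc, rfl, h'⟩ | ⟨c', d, hc, rfl, h'⟩) <;> simp only [oddPos, evenPos] at hc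
    · have := hp.mem_Icc_right h
      have := hp.mem_Icc_left h'
      obtain rfl : c' = c := by omega
      exact pCirc_oddPos (hp.trans h h')
    · have := hp.mem_Icc_right h
      omega
    · have := hp.mem_Icc_left h'
      omega
    · obtain rfl : c' = c := by omega
      exact pCirc_evenPos (hK.trans h h')
  · rintro (⟨a, c, rfl, -, h⟩ | ⟨a, c, rfl, -, h⟩)
    · have := hp.mem_Icc_left h
      simp only [Idx, Set.mem_Icc, oddPos]
      omega
    · have := hK.mem_Icc_left h
      simp only [Idx, Set.mem_Icc, evenPos]
      omega
  · simp only [Idx, Set.mem_Icc] at hx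
    rcases Nat.even_or_odd' x with ⟨a, rfl | rfl⟩
    · exact pCirc_evenPos (hK.rel_self_iff.2 (by simp only [Idx, Set.mem_Icc]; omega))
    · have : 2 * a + 1 = oddPos (a + 1) := by simp only [oddPos]; omega
      rw [this]
      exact pCirc_oddPos (hp.rel_self_iff.2 (by simp only [Idx, Set.mem_Icc]; omega))

theorem nonCrossing_pCirc (hp : IsPartitionOn (Idx n) p) (hnc : NonCrossing p) :
    NonCrossing (pCirc n p) := by
  rintro i j k l hij hjk hkl (⟨a, c, rfl, rfl, hac⟩ | ⟨a, c, rfl, rfl, hac⟩)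
    (⟨b, d, rfl, rfl, hbd⟩ | ⟨b, d, rfl, rfl, hbd⟩) <;>
    simp only [oddPos, evenPos] at hij hjk hkl
  · have := hp.mem_Icc_left hac
    have := hp.mem_Icc_left hbd
    exact pCirc_oddPos (hnc a b c d (by omega) (by omega) (by omega) hac hbd)
  · have := hp.mem_Icc_left hac
    obtain ⟨-, -, hs⟩ := (kmap_iff_of_le hp (by omega)).1 hbd
    have := hs (hp.symm hac) (by simp only [Set.mem_Ioc]; omega)
    simp only [Set.mem_Ioc] at this
    omega
  · have := hp.mem_Icc_left hbd
    obtain ⟨-, -, hs⟩ := (kmap_iff_of_le hp (by omega)).1 hac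
    have := hs hbd (by simp only [Set.mem_Ioc]; omega)
    simp only [Set.mem_Ioc] at this
    omega
  · exact pCirc_evenPos (nonCrossing_kmap hp a b c d (by omega) (by omega) (by omega) hac hbd)

theorem blockOf_pCirc_oddPos (hp : IsPartitionOn (Idx n) p) (ha : 1 ≤ a) :
    blockOf (pCirc n p) (oddPos a) = oddPos '' blockOf p a := by
  ext y
  constructor
  · rintro (⟨a', c, ha', rfl, h⟩ | ⟨a', c, ha', rfl, h⟩)
    · have := hp.mem_Icc_left h
      simp only [oddPos] at ha'
      obtain rfl : a' = a := by omega
      exact ⟨c, h, rfl⟩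
    · simp only [oddPos, evenPos] at ha'
      omega
  · rintro ⟨c, h, rfl⟩
    exact pCirc_oddPos h

theorem blockOf_pCirc_evenPos (hp : IsPartitionOn (Idx n) p) :
    blockOf (pCirc n p) (evenPos a) = evenPos '' blockOf (Kmap n p) a := by
  ext y
  constructor
  · rintro (⟨a', c, ha', rfl, h⟩ | ⟨a', c, ha', rfl, h⟩)
    · have := hp.mem_Icc_left h
      simp only [oddPos, evenPos] at ha'
      omega
    · simp only [evenPos] at ha'
      obtain rfl : a' = a := by omega
      exact ⟨c, h, rfl⟩
  · rintro ⟨c, h, rfl⟩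
    exact pCirc_evenPos h

theorem IsBlock.oddPos_image_eq (hp : IsPartitionOn (Idx n) p) (hB : IsBlock p B) (hb : b ∈ B) :
    oddPos '' B = blockOf (pCirc n p) (oddPos b) := by
  rw [blockOf_pCirc_oddPos hp (hB.subset hp hb).1, ← hB.eq_blockOf hp hb]

theorem IsBlock.isBlock_oddPos_image (hp : IsPartitionOn (Idx n) p) (hB : IsBlock p B) :
    IsBlock (pCirc n p) (oddPos '' B) := by
  obtain ⟨b, hb⟩ := hB.nonempty
  rw [hB.oddPos_image_eq hp hb]
  exact isBlock_blockOf (pCirc_oddPos (hB.rel hp hb hb))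

end PCirc

section Adjacency

variable {n a b c u v y : ℕ} {p : ℕ → ℕ → Prop} {B C : Set ℕ}

theorem Saturated.oddPos_preimage {T : Set ℕ} (hs : Saturated (pCirc n p) T) :
    Saturated p (oddPos ⁻¹' T) :=
  fun _ _ h hm => hs (pCirc_oddPos h) hm

theorem Saturated.evenPos_preimage {T : Set ℕ} (hs : Saturated (pCirc n p) T) :
    Saturated (Kmap n p) (evenPos ⁻¹' T) :=
  fun _ _ h hm => hs (pCirc_evenPos h) hm

theorem kmap_of_saturated_Ioo_evenPos (hp : IsPartitionOn (Idx n) p) (ha : a ∈ Idx n)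
    (hc : c ∈ Idx n) (hac : a ≤ c)
    (hs : Saturated (pCirc n p) (Set.Ioo (evenPos a) (evenPos c))) : Kmap n p a c := by
  refine (kmap_iff_of_le hp hac).2 ⟨ha, hc, ?_⟩
  convert hs.oddPos_preimage using 1
  ext m
  simp only [Set.mem_Ioc, Set.mem_preimage, Set.mem_Ioo, oddPos, evenPos]
  omega

theorem not_saturated_Ioo_oddPos_evenPos (hp : IsPartitionOn (Idx n) p) (ha : a ∈ Idx n)
    (hc : c ∈ Idx n) (hac : a < c) :
    ¬ Saturated (pCirc n p) (Set.Ioo (oddPos a) (evenPos c)) := by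
  intro hs
  have h1 : 1 ≤ a := ha.1
  have hK : Kmap n p a c := by
    refine (kmap_iff_of_le hp hac.le).2 ⟨ha, hc, ?_⟩
    convert hs.oddPos_preimage using 1
    ext m
    simp only [Set.mem_Ioc, Set.mem_preimage, Set.mem_Ioo, oddPos, evenPos]
    omega
  have := hs.evenPos_preimage hK
    (by simp only [Set.mem_preimage, Set.mem_Ioo, oddPos, evenPos]; omega)
  simp only [Set.mem_preimage, Set.mem_Ioo, evenPos] at this
  omega

theorem not_saturated_Ioo_evenPos_oddPos (hp : IsPartitionOn (Idx n) p) (ha : a ∈ Idx n)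
    (hc : c ∈ Idx n) (hac : a + 1 < c) :
    ¬ Saturated (pCirc n p) (Set.Ioo (evenPos a) (oddPos c)) := by
  intro hs
  have hK : Kmap n p a (c - 1) := by
    refine (kmap_iff_of_le hp (by omega)).2 ⟨ha, ⟨by omega, by have := hc.2; omega⟩, ?_⟩
    convert hs.oddPos_preimage using 1
    ext m
    simp only [Set.mem_Ioc, Set.mem_preimage, Set.mem_Ioo, oddPos, evenPos]
    omega
  have := hs.evenPos_preimage ((isPartitionOn_kmap hp).symm hK)
    (by simp only [Set.mem_preimage, Set.mem_Ioo, oddPos, evenPos]; omega)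
  simp only [Set.mem_preimage, Set.mem_Ioo, evenPos] at this
  omega

theorem not_saturated_Ioo_Ico (hp : IsPartitionOn (Idx n) p) (hnc : NonCrossing p)
    (ha : p a a) (hc : p c c) (hac : a < c) (hn : ¬ p a c) (hodd : Saturated p (Set.Ioo a c))
    (heven : Saturated (Kmap n p) (Set.Ico a c)) : False := by
  have hapos := hp.mem_Icc_left ha
  have hC := isBlock_blockOf hc
  by_cases hmin : ∀ m ∈ blockOf p c, c ≤ m
  · obtain ⟨c1, hc1, hmax⟩ := Set.exists_max_image (blockOf p c) id (hC.finite hp) ⟨c, hc⟩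
    have hK := kmap_pred_of_subset_Icc hp hnc hC hc hc1 (fun m hm => ⟨hmin m hm, hmax m hm⟩)
      (by omega)
    have hc1Ico := heven hK (by simp only [Set.mem_Ico]; omega)
    have := hmin c1 hc1
    simp only [Set.mem_Ico] at hc1Ico
    omega
  · push Not at hmin
    obtain ⟨c', hc', hc'c⟩ := hmin
    have hc'a : c' < a := by
      have : c' ≠ a := fun h => hn (h ▸ hp.symm hc')
      have : ¬ (a < c' ∧ c' < c) := fun h => by
        have := hodd (hp.symm hc') h
        simp only [Set.mem_Ioo] at this
        omega
      omega
    have hA := isBlock_blockOf ha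
    have hin : ∀ m ∈ blockOf p a, c' < m ∧ m < c := fun m hm =>
      hnc.mem_Ioo_of_rel hp (hp.symm hc') ⟨hc'a, hac⟩
        (fun h => hn (hp.trans (hp.symm h) (hp.symm hc'))) hm
    obtain ⟨a0, ha0, hmin⟩ := Set.exists_min_image (blockOf p a) id (hA.finite hp) ⟨a, ha⟩
    obtain ⟨a1, ha1, hmax⟩ := Set.exists_max_image (blockOf p a) id (hA.finite hp) ⟨a, ha⟩
    have h0 := hin a0 ha0
    have h1 := hin a1 ha1
    have ha0a : a0 ≤ a := hmin a ha
    have haa1 : a ≤ a1 := hmax a ha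
    have := hp.mem_Icc_right hc'
    have hK := kmap_pred_of_subset_Icc hp hnc hA ha0 ha1 (fun m hm => ⟨hmin m hm, hmax m hm⟩)
      (by omega)
    have ha0Ico := heven ((isPartitionOn_kmap hp).symm hK) (by simp only [Set.mem_Ico]; omega)
    simp only [Set.mem_Ico] at ha0Ico
    omega

theorem not_saturated_Ioo_oddPos_oddPos (hp : IsPartitionOn (Idx n) p) (hnc : NonCrossing p)
    (ha : p a a) (hc : p c c) (hac : a < c) (hn : ¬ p a c) :
    ¬ Saturated (pCirc n p) (Set.Ioo (oddPos a) (oddPos c)) := by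
  intro hs
  have hapos := hp.mem_Icc_left ha
  refine not_saturated_Ioo_Ico hp hnc ha hc hac hn ?_ ?_
  · convert hs.oddPos_preimage using 1
    ext m
    simp only [Set.mem_preimage, Set.mem_Ioo, oddPos]
    omega
  · convert hs.evenPos_preimage using 1
    ext m
    simp only [Set.mem_Ico, Set.mem_preimage, Set.mem_Ioo, oddPos, evenPos]
    omega

theorem eq_succ_of_saturated_Ioo (hp : IsPartitionOn (Idx n) p) (hnc : NonCrossing p)
    (hu : pCirc n p u u) (hv : pCirc n p v v) (huv : u < v) (hn : ¬ pCirc n p u v)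
    (hs : Saturated (pCirc n p) (Set.Ioo u v)) : v = u + 1 := by
  have hK := isPartitionOn_kmap hp
  by_contra hne
  rcases hu with ⟨a, a', rfl, -, ha⟩ | ⟨a, a', rfl, -, ha⟩ <;>
    rcases hv with ⟨c, c', rfl, -, hc⟩ | ⟨c, c', rfl, -, hc⟩ <;>
    simp only [oddPos, evenPos] at huv hne
  · have := hp.mem_Icc_left ha
    exact not_saturated_Ioo_oddPos_oddPos hp hnc (hp.rel_self_left ha) (hp.rel_self_left hc)
      (by omega) (fun h => hn (pCirc_oddPos h)) hs
  · have := hp.mem_Icc_left ha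
    exact not_saturated_Ioo_oddPos_evenPos hp (hp.mem_left ha) (hK.mem_left hc) (by omega) hs
  · have := hp.mem_Icc_left hc
    exact not_saturated_Ioo_evenPos_oddPos hp (hK.mem_left ha) (hp.mem_left hc) (by omega) hs
  · exact hn (pCirc_evenPos
      (kmap_of_saturated_Ioo_evenPos hp (hK.mem_left ha) (hK.mem_left hc) (by omega) hs))

theorem exists_eq_blockOf_evenPos_of_adjacent (hp : IsPartitionOn (Idx n) p)
    (hnc : NonCrossing p) (hB : IsBlock p B) (hC : Adjacent (pCirc n p) (oddPos '' B) C) :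
    ∃ b ∈ B, C = blockOf (pCirc n p) (evenPos b) := by
  have hP := isPartitionOn_pCirc hp
  obtain ⟨hX, hC, hne, hmerge⟩ := hC
  obtain ⟨u, v, huv, hu, hv, hn, hs⟩ :=
    exists_saturated_Ioo_of_nonCrossing_mergeRel hP hX hC hne hmerge
  have hrefl : ∀ w ∈ oddPos '' B ∪ C, pCirc n p w w := fun w hw =>
    hw.elim (fun h => hX.rel hP h h) (fun h => hC.rel hP h h)
  obtain rfl := eq_succ_of_saturated_Ioo hp hnc (hrefl u hu) (hrefl _ hv) huv hn hs
  have hu1 := hP.mem_Icc_left (hrefl u hu)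
  rcases hu with hu | hu <;> rcases hv with hv | hv
  · exact (hn (hX.rel hP hu hv)).elim
  · obtain ⟨b, hb, rfl⟩ := hu
    refine ⟨b, hb, hC.eq_blockOf hP ?_⟩
    convert hv using 1
    have := (hB.subset hp hb).1
    simp only [oddPos, evenPos]
    omega
  · obtain ⟨c, hc, hcu⟩ := hv
    simp only [oddPos] at hcu
    obtain ⟨b, hb, hK⟩ := exists_mem_kmap_pred hp hnc hB hc (by omega)
    refine ⟨b, hb, (hC.eq_blockOf hP hu).trans (hP.blockOf_eq ?_)⟩
    convert pCirc_evenPos hK using 1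
    simp only [evenPos]
    omega
  · exact (hn (hC.rel hP hu hv)).elim

theorem IsBlock.isBlock_blockOf_evenPos (hp : IsPartitionOn (Idx n) p) (hB : IsBlock p B)
    (hb : b ∈ B) : IsBlock (pCirc n p) (blockOf (pCirc n p) (evenPos b)) :=
  isBlock_blockOf (pCirc_evenPos ((isPartitionOn_kmap hp).rel_self_iff.2 (hB.subset hp hb)))

theorem IsBlock.evenPos_mem_blockOf (hp : IsPartitionOn (Idx n) p) (hB : IsBlock p B)
    (hb : b ∈ B) : evenPos b ∈ blockOf (pCirc n p) (evenPos b) :=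
  pCirc_evenPos ((isPartitionOn_kmap hp).rel_self_iff.2 (hB.subset hp hb))

theorem IsBlock.adjacent_blockOf_evenPos (hp : IsPartitionOn (Idx n) p) (hnc : NonCrossing p)
    (hB : IsBlock p B) (hb : b ∈ B) :
    Adjacent (pCirc n p) (oddPos '' B) (blockOf (pCirc n p) (evenPos b)) := by
  have hb1 := (hB.subset hp hb).1
  have hX := hB.isBlock_oddPos_image hp
  have hE := hB.isBlock_blockOf_evenPos hp hb
  have hsucc : oddPos b + 1 = evenPos b := by
    simp only [oddPos, evenPos]
    omega
  refine ⟨hX, hE, fun h => ?_, nonCrossing_mergeRel_of_succ_mem (isPartitionOn_pCirc hp)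
    (nonCrossing_pCirc hp hnc) hX hE ⟨b, hb, rfl⟩ (hsucc ▸ hB.evenPos_mem_blockOf hp hb)⟩
  obtain ⟨m, hm, hme⟩ : evenPos b ∈ oddPos '' B := h ▸ hB.evenPos_mem_blockOf hp hb
  have := (hB.subset hp hm).1
  simp only [oddPos, evenPos] at hme
  omega

theorem adjacent_oddPos_image_iff (hp : IsPartitionOn (Idx n) p) (hnc : NonCrossing p)
    (hB : IsBlock p B) :
    Adjacent (pCirc n p) (oddPos '' B) C ↔ ∃ b ∈ B, C = blockOf (pCirc n p) (evenPos b) :=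
  ⟨exists_eq_blockOf_evenPos_of_adjacent hp hnc hB,
    fun ⟨_, hb, hC⟩ => hC ▸ hB.adjacent_blockOf_evenPos hp hnc hb⟩

theorem IsBlock.mem_blockOf_evenPos (hp : IsPartitionOn (Idx n) p) (hB : IsBlock p B)
    (hb : b ∈ B) (hc : c ∈ B) (hlt : b < c) (hy : y ∈ blockOf (pCirc n p) (evenPos b)) :
    oddPos b < y ∧ y < oddPos c := by
  rw [blockOf_pCirc_evenPos hp] at hy
  obtain ⟨f, hf, rfl⟩ := hy
  have := kmap_mem_Ico hp (hB.rel hp hb hc) hlt hf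
  have := (hB.subset hp hb).1
  simp only [oddPos, evenPos]
  omega

end Adjacency

section Depth

variable {m : ℕ} {r : ℕ → ℕ → Prop} {B E X Y Z : Set ℕ} {a b : ℕ}

def chainLengths (r : ℕ → ℕ → Prop) (B : Set ℕ) : Set ℕ :=
  {m : ℕ | ∃ c : ℕ → Set ℕ, c 1 = B ∧
    (∀ i, 1 ≤ i → i ≤ m → IsBlock r (c i)) ∧
    (∀ i, 1 ≤ i → i < m → Nested (c i) (c (i + 1)))}

theorem one_mem_chainLengths (hB : IsBlock r B) : 1 ∈ chainLengths r B :=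
  ⟨fun _ => B, rfl, fun _ _ _ => hB, fun _ _ h => absurd h (by omega)⟩

/-- Along a chain the maxima of the blocks increase strictly. -/
theorem bddAbove_chainLengths (hr : IsPartitionOn (Idx m) r) : BddAbove (chainLengths r B) := by
  refine ⟨m, ?_⟩
  rintro k ⟨c, -, hcb, hcn⟩
  have hsup : ∀ i, 1 ≤ i → i ≤ k → sSup (c i) ∈ Idx m := fun i h1 h2 =>
    (hcb i h1 h2).subset hr (Nat.sSup_mem (hcb i h1 h2).nonempty ((hcb i h1 h2).finite hr).bddAbove)
  have key : ∀ j, 1 ≤ j → j ≤ k → j ≤ sSup (c j) := by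
    intro j hj
    induction j, hj using Nat.le_induction with
    | base => exact fun hk => (hsup 1 le_rfl hk).1
    | succ j hj ih =>
      intro hk
      have := ih (by omega)
      have := (hcn j hj (by omega)).2
      omega
  rcases Nat.eq_zero_or_pos k with rfl | hk
  · exact Nat.zero_le m
  · exact (key k hk le_rfl).trans (hsup k hk le_rfl).2

theorem depth_mem_chainLengths (hr : IsPartitionOn (Idx m) r) (hB : IsBlock r B) :
    depth r B ∈ chainLengths r B :=
  Nat.sSup_mem ⟨1, one_mem_chainLengths hB⟩ (bddAbove_chainLengths hr)

theorem depth_lt_of_nested (hr : IsPartitionOn (Idx m) r) (hX : IsBlock r X) (hY : IsBlock r Y)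
    (h : Nested Y X) : depth r X < depth r Y := by
  obtain ⟨c, hc1, hcb, hcn⟩ := depth_mem_chainLengths hr hX
  have hmem : depth r X + 1 ∈ chainLengths r Y := by
    refine ⟨fun j => if j = 1 then Y else c (j - 1), rfl, fun i h1 h2 => ?_, fun i h1 h2 => ?_⟩
    · by_cases hi : i = 1
      · simpa [hi] using hY
      · simpa [hi] using hcb (i - 1) (by omega) (by omega)
    · by_cases hi : i = 1
      · simpa [hi, hc1] using h
      · have := hcn (i - 1) (by omega) (by omega)
        rw [Nat.sub_add_cancel (by omega)] at this
        simpa [hi, show i ≠ 0 by omega] using this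
  exact Nat.lt_of_succ_le (le_csSup (bddAbove_chainLengths hr) hmem)

theorem depth_le_of_forall_nested (hr : IsPartitionOn (Idx m) r) (hX : IsBlock r X)
    (hY : IsBlock r Y) (h : ∀ Z, IsBlock r Z → Nested Y Z → Nested X Z) :
    depth r Y ≤ depth r X := by
  refine csSup_le ⟨1, one_mem_chainLengths hY⟩ ?_
  rintro k ⟨c, hc1, hcb, hcn⟩
  refine le_csSup (bddAbove_chainLengths hr)
    ⟨fun j => if j = 1 then X else c j, rfl, fun i h1 h2 => ?_, fun i h1 h2 => ?_⟩
  · by_cases hi : i = 1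
    · simpa [hi] using hX
    · simpa [hi] using hcb i h1 h2
  · by_cases hi : i = 1
    · subst hi
      simpa using h (c 2) (hcb 2 (by omega) (by omega)) (hc1 ▸ hcn 1 le_rfl h2)
    · simpa [hi, show i ≠ 0 by omega] using hcn i h1 h2

theorem nested_of_forall_mem (ha : a ∈ X) (hb : b ∈ X) (hX : BddAbove X) (hY : Y.Nonempty)
    (hY' : BddAbove Y) (h : ∀ y ∈ Y, a < y ∧ y < b) : Nested Y X :=
  ⟨(Nat.sInf_le ha).trans_lt (h _ (Nat.sInf_mem hY)).1,
    (h _ (Nat.sSup_mem hY hY')).2.trans_le (le_csSup hX hb)⟩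

theorem Nested.of_forall_mem (h : Nested E Z) (hE : BddAbove E) (ha : a ∈ E) (hb : b ∈ E)
    (hX : X.Nonempty) (hXab : ∀ x ∈ X, a ≤ x ∧ x ≤ b) : Nested X Z :=
  ⟨h.1.trans_le ((Nat.sInf_le ha).trans (le_csInf hX fun x hx => (hXab x hx).1)),
    (csSup_le hX fun x hx => (hXab x hx).2).trans_lt ((le_csSup hE hb).trans_lt h.2)⟩

end Depth

section Envelope

variable {n b c : ℕ} {p : ℕ → ℕ → Prop} {B : Set ℕ}

theorem IsBlock.depth_lt_depth_blockOf_evenPos (hp : IsPartitionOn (Idx n) p) (hB : IsBlock p B)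
    (hb : b ∈ B) (hc : c ∈ B) (hlt : b < c) :
    depth (pCirc n p) (oddPos '' B) < depth (pCirc n p) (blockOf (pCirc n p) (evenPos b)) := by
  have hP := isPartitionOn_pCirc hp
  have hX := hB.isBlock_oddPos_image hp
  have hE := hB.isBlock_blockOf_evenPos hp hb
  exact depth_lt_of_nested hP hX hE (nested_of_forall_mem ⟨b, hb, rfl⟩ ⟨c, hc, rfl⟩
    (hX.finite hP).bddAbove hE.nonempty (hE.finite hP).bddAbove
    fun _ hy => hB.mem_blockOf_evenPos hp hb hc hlt hy)

theorem IsBlock.depth_blockOf_evenPos_le (hp : IsPartitionOn (Idx n) p) (hnc : NonCrossing p)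
    (hB : IsBlock p B) (hb : b ∈ B) (hle : ∀ c ∈ B, c ≤ b) :
    depth (pCirc n p) (blockOf (pCirc n p) (evenPos b)) ≤ depth (pCirc n p) (oddPos '' B) := by
  have hP := isPartitionOn_pCirc hp
  have hX := hB.isBlock_oddPos_image hp
  have hE := hB.isBlock_blockOf_evenPos hp hb
  refine depth_le_of_forall_nested hP hX hE fun Z hZ hEZ => ?_
  obtain ⟨a, ha, hmin⟩ := Set.exists_min_image B id (hB.finite hp) ⟨b, hb⟩
  have hsub : B ⊆ Set.Icc a b := fun m hm => ⟨hmin m hm, hle m hm⟩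
  have ha1 := (hB.subset hp ha).1
  rcases (by omega : a = 1 ∨ 2 ≤ a) with rfl | h2
  · have hnE : evenPos n ∈ blockOf (pCirc n p) (evenPos b) :=
      pCirc_evenPos (kmap_of_one_mem hp hnc hB ha hb hsub)
    have hZ2n := hZ.subset hP (Nat.sSup_mem hZ.nonempty (hZ.finite hP).bddAbove)
    have := hEZ.2.trans_le' (le_csSup (hE.finite hP).bddAbove hnE)
    simp only [Idx, Set.mem_Icc, evenPos] at hZ2n this
    omega
  · have haE : evenPos (a - 1) ∈ blockOf (pCirc n p) (evenPos b) :=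
      pCirc_evenPos ((isPartitionOn_kmap hp).symm (kmap_pred_of_subset_Icc hp hnc hB ha hb hsub h2))
    refine hEZ.of_forall_mem (hE.finite hP).bddAbove haE (hB.evenPos_mem_blockOf hp hb)
      ⟨oddPos b, b, hb, rfl⟩ ?_
    rintro _ ⟨m, hm, rfl⟩
    have := hsub hm
    simp only [Set.mem_Icc, oddPos, evenPos] at this ⊢
    omega

theorem IsBlock.injOn_blockOf_evenPos (hp : IsPartitionOn (Idx n) p) (hB : IsBlock p B) :
    Set.InjOn (fun b => blockOf (pCirc n p) (evenPos b)) B := by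
  have key : ∀ b ∈ B, ∀ c ∈ B, b < c →
      blockOf (pCirc n p) (evenPos b) ≠ blockOf (pCirc n p) (evenPos c) := by
    intro b hb c hc hlt h
    have := hB.mem_blockOf_evenPos hp hb hc hlt (h ▸ hB.evenPos_mem_blockOf hp hc)
    simp only [oddPos, evenPos] at this
    omega
  intro b hb c hc h
  rcases lt_trichotomy b c with hlt | rfl | hlt
  exacts [(key b hb c hc hlt h).elim, rfl, (key c hc b hb hlt h.symm).elim]

theorem IsBlock.adjacent_and_depth_le_iff (hp : IsPartitionOn (Idx n) p) (hnc : NonCrossing p)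
    (hB : IsBlock p B) (hb : b ∈ B) (hle : ∀ c ∈ B, c ≤ b) {C : Set ℕ} :
    (Adjacent (pCirc n p) (oddPos '' B) C ∧
      depth (pCirc n p) C ≤ depth (pCirc n p) (oddPos '' B)) ↔
      C = blockOf (pCirc n p) (evenPos b) := by
  rw [adjacent_oddPos_image_iff hp hnc hB]
  constructor
  · rintro ⟨⟨c, hc, rfl⟩, hdepth⟩
    obtain rfl | hlt := (hle c hc).eq_or_lt
    · rfl
    · exact absurd hdepth (hB.depth_lt_depth_blockOf_evenPos hp hc hb hlt).not_ge
  · rintro rfl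
    exact ⟨⟨b, hb, rfl⟩, hB.depth_blockOf_evenPos_le hp hnc hb hle⟩

theorem IsBlock.setOf_adjacent_and_depth_lt (hp : IsPartitionOn (Idx n) p) (hnc : NonCrossing p)
    (hB : IsBlock p B) (hb : b ∈ B) (hle : ∀ c ∈ B, c ≤ b) :
    {C | Adjacent (pCirc n p) (oddPos '' B) C ∧
      depth (pCirc n p) (oddPos '' B) < depth (pCirc n p) C} =
      (fun c => blockOf (pCirc n p) (evenPos c)) '' (B \ {b}) := by
  ext C
  simp only [Set.mem_ofPred_eq, adjacent_oddPos_image_iff hp hnc hB]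
  constructor
  · rintro ⟨⟨c, hc, rfl⟩, hdepth⟩
    refine ⟨c, ⟨hc, fun hcb => ?_⟩, rfl⟩
    rw [Set.mem_singleton_iff] at hcb
    subst hcb
    exact absurd hdepth (hB.depth_blockOf_evenPos_le hp hnc hb hle).not_gt
  · rintro ⟨c, ⟨hc, hcb⟩, rfl⟩
    exact ⟨⟨c, hc, rfl⟩, hB.depth_lt_depth_blockOf_evenPos hp hc hb
      ((hle c hc).lt_of_ne hcb)⟩

theorem IsBlock.existsUnique_adjacent_between (hp : IsPartitionOn (Idx n) p)
    (hnc : NonCrossing p) (hB : IsBlock p B) (hb : b ∈ B) (hc : c ∈ B) (hlt : b < c)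
    (hgap : ∀ m ∈ B, m ≤ b ∨ c ≤ m) :
    ∃! C : Set ℕ, Adjacent (pCirc n p) (oddPos '' B) C ∧
      depth (pCirc n p) (oddPos '' B) < depth (pCirc n p) C ∧
      ∀ x ∈ C, oddPos b < x ∧ x < oddPos c := by
  refine ⟨blockOf (pCirc n p) (evenPos b),
    ⟨hB.adjacent_blockOf_evenPos hp hnc hb,
      hB.depth_lt_depth_blockOf_evenPos hp hb hc hlt,
      fun _ hx => hB.mem_blockOf_evenPos hp hb hc hlt hx⟩, ?_⟩
  rintro C ⟨hC, -, hCx⟩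
  obtain ⟨d, hd, rfl⟩ := exists_eq_blockOf_evenPos_of_adjacent hp hnc hB hC
  have := hCx _ (hB.evenPos_mem_blockOf hp hd)
  have := hgap d hd
  simp only [oddPos, evenPos] at *
  obtain rfl : d = b := by omega
  rfl

end Envelope

section Rank

variable {S : Set ℕ} {i x y : ℕ}

theorem ncard_inter_Iic_lt (hS : S.Finite) (hxy : x < y) (hy : y ∈ S) :
    (S ∩ Set.Iic x).ncard < (S ∩ Set.Iic y).ncard := by
  have hsub : S ∩ Set.Iic x ⊆ S ∩ Set.Iic y :=
    Set.inter_subset_inter_right S (Set.Iic_subset_Iic.2 hxy.le)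
  refine Set.ncard_lt_ncard ((Set.ssubset_iff_of_subset hsub).2
    ⟨y, ⟨hy, Set.mem_Iic.2 le_rfl⟩, fun h => absurd (Set.mem_Iic.1 h.2) hxy.not_ge⟩)
    (hS.subset Set.inter_subset_left)

/-- The rank `x ↦ |S ∩ [0, x]|` is injective on `S` with values in `[1, |S|]`, hence onto. -/
theorem exists_ncard_inter_Iic_eq (hS : S.Finite) (h1 : 1 ≤ i) (h2 : i ≤ S.ncard) :
    ∃ x ∈ S, (S ∩ Set.Iic x).ncard = i := by
  have hinj : Set.InjOn (fun x => (S ∩ Set.Iic x).ncard) S := fun x hx y hy h => by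
    rcases lt_trichotomy x y with hxy | rfl | hxy
    · exact absurd h (ncard_inter_Iic_lt hS hxy hy).ne
    · rfl
    · exact absurd h (ncard_inter_Iic_lt hS hxy hx).ne'
  have hsub : (fun x => (S ∩ Set.Iic x).ncard) '' S ⊆ Set.Icc 1 S.ncard := by
    rintro _ ⟨x, hx, rfl⟩
    exact ⟨(Set.ncard_pos (hS.subset Set.inter_subset_left)).2 ⟨x, hx, Set.mem_Iic.2 le_rfl⟩,
      Set.ncard_le_ncard Set.inter_subset_left hS⟩
  have heq := Set.eq_of_subset_of_ncard_le hsub (by rw [hinj.ncard_image, Set.ncard_Icc_nat]; omega)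
    (Set.finite_Icc _ _)
  obtain ⟨x, hx, hxi⟩ := heq.symm ▸ (show i ∈ Set.Icc 1 S.ncard from ⟨h1, h2⟩)
  exact ⟨x, hx, hxi⟩

theorem nthSmall_spec (hS : S.Finite) (h1 : 1 ≤ i) (h2 : i ≤ S.ncard) :
    nthSmall S i ∈ S ∧ (S ∩ Set.Iic (nthSmall S i)).ncard = i :=
  Nat.sInf_mem (exists_ncard_inter_Iic_eq hS h1 h2)

theorem nthSmall_lt_nthSmall_succ (hS : S.Finite) (h1 : 1 ≤ i) (h2 : i + 1 ≤ S.ncard) :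
    nthSmall S i < nthSmall S (i + 1) ∧
      ∀ m ∈ S, m ≤ nthSmall S i ∨ nthSmall S (i + 1) ≤ m := by
  obtain ⟨hx, hxi⟩ := nthSmall_spec hS h1 (by omega)
  obtain ⟨hy, hyi⟩ := nthSmall_spec hS (by omega) h2
  refine ⟨?_, fun m hm => ?_⟩
  · rcases lt_trichotomy (nthSmall S i) (nthSmall S (i + 1)) with h | h | h
    · exact h
    · rw [h] at hxi
      omega
    · have := ncard_inter_Iic_lt hS h hx
      omega
  · by_contra! h
    have := ncard_inter_Iic_lt hS h.1 hm
    have := ncard_inter_Iic_lt hS h.2 hy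
    omega

end Rank

/-- enveloping blocks. For a block `B` of `p ∈ NC(n)` (viewed as
the block `oddPos '' B` of `p°`): (i) every block of `p°` adjacent to it
consists of even positions, i.e. comes from `K(p)`; (ii) exactly one adjacent
block has depth at most `d_{p°}(B)`; (iii) the adjacent blocks of strictly
larger depth number exactly `|B| - 1`, and for each `1 ≤ i ≤ |B| - 1` exactly
one of them lies entirely strictly between the positions of the `i`-th and
`(i+1)`-th smallest elements of `B`. -/
theorem enveloping_blocks
    (n : ℕ) (p : ℕ → ℕ → Prop)
    (hp : IsPartitionOn (Idx n) p) (hnc : NonCrossing p)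
    (B : Set ℕ) (hB : IsBlock p B) :
    (∀ C : Set ℕ, Adjacent (pCirc n p) (oddPos '' B) C →
      (∀ x ∈ C, Even x) ∧ ∃ C₀ : Set ℕ, IsBlock (Kmap n p) C₀ ∧ C = evenPos '' C₀) ∧
    (∃! C : Set ℕ, Adjacent (pCirc n p) (oddPos '' B) C ∧
      depth (pCirc n p) C ≤ depth (pCirc n p) (oddPos '' B)) ∧
    {C : Set ℕ | Adjacent (pCirc n p) (oddPos '' B) C ∧
      depth (pCirc n p) (oddPos '' B) < depth (pCirc n p) C}.ncard = B.ncard - 1 ∧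
    (∀ i, 1 ≤ i → i ≤ B.ncard - 1 →
      ∃! C : Set ℕ, Adjacent (pCirc n p) (oddPos '' B) C ∧
        depth (pCirc n p) (oddPos '' B) < depth (pCirc n p) C ∧
        ∀ x ∈ C, oddPos (nthSmall B i) < x ∧ x < oddPos (nthSmall B (i + 1))) := by
  have hfin := hB.finite hp
  obtain ⟨bmax, hbmax, hle⟩ := Set.exists_max_image B id hfin hB.nonempty
  refine ⟨fun C hC => ?_, ⟨_, (hB.adjacent_and_depth_le_iff hp hnc hbmax hle).2 rfl,
    fun C hC => (hB.adjacent_and_depth_le_iff hp hnc hbmax hle).1 hC⟩, ?_, fun i hi1 hi2 => ?_⟩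
  · obtain ⟨b, hb, rfl⟩ := (adjacent_oddPos_image_iff hp hnc hB).1 hC
    rw [blockOf_pCirc_evenPos hp]
    refine ⟨fun _ ⟨f, _, hf⟩ => hf ▸ even_two_mul f, _, isBlock_blockOf ?_, rfl⟩
    exact (isPartitionOn_kmap hp).rel_self_iff.2 (hB.subset hp hb)
  · rw [hB.setOf_adjacent_and_depth_lt hp hnc hbmax hle,
      (hB.injOn_blockOf_evenPos hp).mono Set.sdiff_subset |>.ncard_image,
      Set.ncard_sdiff_singleton_of_mem hbmax]
  · obtain ⟨hlt, hgap⟩ := nthSmall_lt_nthSmall_succ hfin hi1 (by omega)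
    exact hB.existsUnique_adjacent_between hp hnc (nthSmall_spec hfin hi1 (by omega)).1
      (nthSmall_spec hfin (by omega) (by omega)).1 hlt hgap

end NCPaper
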